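/- For all r_b > 0 and r_d > 0, and all x ∈ ℝ² with r_b ≤ ‖x‖ < r_b + r_d, the Lebesgue measure of the lens satisfies vol(B(0, r_b) ∩ B(x, r_d)) > 0. Consequently, for every device intensity λ > 0, the expected one-hop-augmented covered area A(λ) = π (r_b + r_d)² − 2π ∫_{r_b}^{r_b + r_d} s · exp(−λ · vol(B(0, r_b) ∩ B(s·e₁, r_d))) ds satisfies the strict inequality A(λ) > π r_b²: one-hop D2D relaying strictly extends the coverage of the base station. -/

import Mathlib

/-!
Two closed balls of positive radii whose centres are closer than the sum of the radii share
an open ball, so for `‖x‖ < r_b + r_d` the lens has positive area. Hence on `(r_b, r_b + r_d)`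
the integrand `s · exp(-λ · vol(lens))` lies strictly below `s`, and since
`∫_{r_b}^{r_b + r_d} s ds = ((r_b + r_d)² - r_b²) / 2`, the subtracted term is strictly
smaller than `π ((r_b + r_d)² - r_b²)`.
-/

open MeasureTheory Metric Real

/-- The expected one-hop-augmented covered area of Theorem 1, as a function of the
device intensity `λ`. -/
noncomputable def coveredArea (rb rd lam : ℝ) : ℝ :=
  π * (rb + rd) ^ 2 -
    2 * π * ∫ s in rb..(rb + rd),
      s * Real.exp (-lam *
        (volume (closedBall (0 : EuclideanSpace ℝ (Fin 2)) rb ∩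
          closedBall (s • EuclideanSpace.single (0 : Fin 2) (1 : ℝ)) rd)).toReal)

theorem measure_closedBall_inter_closedBall_pos {E : Type*} [NormedAddCommGroup E]
    [NormedSpace ℝ E] [MeasurableSpace E] [OpensMeasurableSpace E] (μ : Measure E)
    [μ.IsOpenPosMeasure] {x y : E} {r s : ℝ} (hr : 0 < r) (hs : 0 < s)
    (hxy : dist x y < r + s) : 0 < μ (closedBall x r ∩ closedBall y s) := by
  obtain ⟨z, hxz, hzy⟩ := exists_dist_lt_lt hr hs (by rwa [add_comm])
  have hz : z ∈ ball x r ∩ ball y s := ⟨mem_ball_comm.mp hxz, hzy⟩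
  calc 0 < μ (ball x r ∩ ball y s) := (isOpen_ball.inter isOpen_ball).measure_pos μ ⟨z, hz⟩
    _ ≤ μ (closedBall x r ∩ closedBall y s) :=
      measure_mono (Set.inter_subset_inter ball_subset_closedBall ball_subset_closedBall)

theorem mul_exp_neg_mul_lt_self {s lam v : ℝ} (hs : 0 < s) (hlam : 0 < lam) (hv : 0 < v) :
    s * exp (-lam * v) < s :=
  mul_lt_of_lt_one_right hs (exp_lt_one_iff.mpr (by nlinarith))

/-- The strict inequality survives the junk value `0` of a non-integrable integral because
`∫ s in a..b, s > 0` for `0 ≤ a < b`. -/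
theorem intervalIntegral_lt_integral_id {g : ℝ → ℝ} {a b : ℝ} (ha : 0 ≤ a) (hab : a < b)
    (hg : ∀ s ∈ Set.Ioo a b, g s < s) : ∫ s in a..b, g s < ∫ s in a..b, s := by
  have hid : IntervalIntegrable (fun s : ℝ => s) volume a b :=
    intervalIntegral.intervalIntegrable_id
  by_cases hgi : IntervalIntegrable g volume a b
  · have hgap : 0 < ∫ s in a..b, (s - g s) :=
      intervalIntegral.intervalIntegral_pos_of_pos_on (hid.sub hgi)
        (fun s hs => sub_pos.mpr (hg s hs)) hab
    rw [intervalIntegral.integral_sub hid hgi] at hgap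
    linarith
  · rw [intervalIntegral.integral_undef hgi, integral_id]
    nlinarith

/-- For `r_b ≤ ‖x‖ < r_b + r_d` the lens `B(0,r_b) ∩ B(x,r_d)` has
positive Lebesgue measure, and consequently `A(λ) > π r_b²` for every `λ > 0`. -/
theorem lens_pos_and_strict_coverage (rb rd : ℝ) (hrb : 0 < rb) (hrd : 0 < rd) :
    (∀ x : EuclideanSpace ℝ (Fin 2), rb ≤ ‖x‖ → ‖x‖ < rb + rd →
      0 < (volume (closedBall (0 : EuclideanSpace ℝ (Fin 2)) rb ∩
        closedBall x rd)).toReal) ∧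
    (∀ lam : ℝ, 0 < lam → π * rb ^ 2 < coveredArea rb rd lam) := by
  have lens_pos : ∀ x : EuclideanSpace ℝ (Fin 2), ‖x‖ < rb + rd →
      0 < (volume (closedBall (0 : EuclideanSpace ℝ (Fin 2)) rb ∩
        closedBall x rd)).toReal := fun x hx =>
    ENNReal.toReal_pos
      (measure_closedBall_inter_closedBall_pos volume hrb hrd (by rwa [dist_zero_left])).ne'
      (measure_mono Set.inter_subset_left |>.trans_lt measure_closedBall_lt_top).ne
  refine ⟨fun x _ hx => lens_pos x hx, fun lam hlam => ?_⟩
  have area_gt : ∀ I : ℝ, I < ((rb + rd) ^ 2 - rb ^ 2) / 2 →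
      π * rb ^ 2 < π * (rb + rd) ^ 2 - 2 * π * I := fun I hI => by nlinarith [pi_pos]
  refine area_gt _ <| (intervalIntegral_lt_integral_id hrb.le (lt_add_of_pos_right rb hrd)
    fun s hs => mul_exp_neg_mul_lt_self (hrb.trans hs.1) hlam <| lens_pos _ ?_).trans_eq
    integral_id
  rw [norm_smul, PiLp.norm_single, norm_one, mul_one, norm_eq_abs, abs_of_pos (hrb.trans hs.1)]
  exact hs.2
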